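/- The cubic form f(x) = 2∑_{i=1}^6 x_i^3 + 3(x_1^2x_2 + x_1x_2^2 + x_3^2x_4 + x_3x_4^2 + x_5^2x_6 + x_5x_6^2) + 2(x_2x_3x_5 + x_1x_4x_5 + x_1x_3x_6 + x_2x_4x_6) + 4(x_1x_3x_5 + x_2x_4x_5 + x_2x_3x_6 + x_1x_4x_6) defines a smooth hypersurface in ℙ^5(ℂ). -/
import Mathlib


open MvPolynomial

noncomputable def A7cubic : MvPolynomial (Fin 6) ℂ :=
  2 * (X 0 ^ 3 + X 1 ^ 3 + X 2 ^ 3 + X 3 ^ 3 + X 4 ^ 3 + X 5 ^ 3)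
  + 3 * (X 0 ^ 2 * X 1 + X 0 * X 1 ^ 2 + X 2 ^ 2 * X 3 + X 2 * X 3 ^ 2
      + X 4 ^ 2 * X 5 + X 4 * X 5 ^ 2)
  + 2 * (X 1 * X 2 * X 4 + X 0 * X 3 * X 4 + X 0 * X 2 * X 5 + X 1 * X 3 * X 5)
  + 4 * (X 0 * X 2 * X 4 + X 1 * X 3 * X 4 + X 1 * X 2 * X 5 + X 0 * X 3 * X 5)

theorem A7cubic_C : A7cubic =
  C 2 * (X 0 ^ 3 + X 1 ^ 3 + X 2 ^ 3 + X 3 ^ 3 + X 4 ^ 3 + X 5 ^ 3)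
  + C 3 * (X 0 ^ 2 * X 1 + X 0 * X 1 ^ 2 + X 2 ^ 2 * X 3 + X 2 * X 3 ^ 2
      + X 4 ^ 2 * X 5 + X 4 * X 5 ^ 2)
  + C 2 * (X 1 * X 2 * X 4 + X 0 * X 3 * X 4 + X 0 * X 2 * X 5 + X 1 * X 3 * X 5)
  + C 4 * (X 0 * X 2 * X 4 + X 1 * X 3 * X 4 + X 1 * X 2 * X 5 + X 0 * X 3 * X 5) := by
  simp only [A7cubic, map_ofNat]

theorem A7deriv0 (x : Fin 6 → ℂ) : eval x (pderiv 0 A7cubic) =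
    6*x 0^2 + 6*x 0*x 1 + 3*x 1^2 + 2*(x 3*x 4) + 2*(x 2*x 5) + 4*(x 2*x 4) + 4*(x 3*x 5) := by
  simp [A7cubic_C, pderiv_mul, pderiv_pow, pderiv_C, pderiv_X, Pi.single_apply]; ring

theorem A7deriv1 (x : Fin 6 → ℂ) : eval x (pderiv 1 A7cubic) =
    6*x 1^2 + 3*x 0^2 + 6*x 0*x 1 + 2*(x 2*x 4) + 2*(x 3*x 5) + 4*(x 3*x 4) + 4*(x 2*x 5) := by
  simp [A7cubic_C, pderiv_mul, pderiv_pow, pderiv_C, pderiv_X, Pi.single_apply]; ring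

theorem A7deriv2 (x : Fin 6 → ℂ) : eval x (pderiv 2 A7cubic) =
    6*x 2^2 + 6*x 2*x 3 + 3*x 3^2 + 2*(x 1*x 4) + 2*(x 0*x 5) + 4*(x 0*x 4) + 4*(x 1*x 5) := by
  simp [A7cubic_C, pderiv_mul, pderiv_pow, pderiv_C, pderiv_X, Pi.single_apply]; ring

theorem A7deriv3 (x : Fin 6 → ℂ) : eval x (pderiv 3 A7cubic) =
    6*x 3^2 + 3*x 2^2 + 6*x 2*x 3 + 2*(x 0*x 4) + 2*(x 1*x 5) + 4*(x 1*x 4) + 4*(x 0*x 5) := by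
  simp [A7cubic_C, pderiv_mul, pderiv_pow, pderiv_C, pderiv_X, Pi.single_apply]; ring

theorem A7deriv4 (x : Fin 6 → ℂ) : eval x (pderiv 4 A7cubic) =
    6*x 4^2 + 6*x 4*x 5 + 3*x 5^2 + 2*(x 1*x 2) + 2*(x 0*x 3) + 4*(x 0*x 2) + 4*(x 1*x 3) := by
  simp [A7cubic_C, pderiv_mul, pderiv_pow, pderiv_C, pderiv_X, Pi.single_apply]; ring

theorem A7deriv5 (x : Fin 6 → ℂ) : eval x (pderiv 5 A7cubic) =
    6*x 5^2 + 3*x 4^2 + 6*x 4*x 5 + 2*(x 0*x 2) + 2*(x 1*x 3) + 4*(x 1*x 2) + 4*(x 0*x 3) := by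
  simp [A7cubic_C, pderiv_mul, pderiv_pow, pderiv_C, pderiv_X, Pi.single_apply]; ring

set_option maxHeartbeats 4000000 in
/-- The `3.A₇`-invariant cubic form defines a smooth hypersurface in `ℙ⁵(ℂ)`:
the common vanishing locus of `f` and all of its partial derivatives in `ℂ⁶` is `{0}`. -/
theorem A7cubic_smooth :
    ∀ x : Fin 6 → ℂ, eval x A7cubic = 0 →
      (∀ i : Fin 6, eval x (pderiv i A7cubic) = 0) → x = 0 := by
  intro x _ hd
  have h0 := (A7deriv0 x) ▸ hd 0
  have h1 := (A7deriv1 x) ▸ hd 1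
  have h2 := (A7deriv2 x) ▸ hd 2
  have h3 := (A7deriv3 x) ▸ hd 3
  have h4 := (A7deriv4 x) ▸ hd 4
  have h5 := (A7deriv5 x) ▸ hd 5
  have hz0 : x 0 ^ 7 = 0 := by
    linear_combination (norm := ring1) (((-13900606)/14058765)*x 3*x 5^4 + ((-31050923)/14058765)*x 3*x 4*x 5^3 + ((-21883093)/9372510)*x 3*x 4^2*x 5^2 + ((-8763803)/14058765)*x 3*x 4^3*x 5 + ((9971036)/14058765)*x 3*x 4^4 + ((-24113)/1562085)*x 3^4*x 5 + ((240790001)/187450200)*x 3^4*x 4 + ((-926297)/1562085)*x 2*x 4*x 5^3 + ((-130439)/223155)*x 2*x 4^2*x 5^2 + ((8)/315)*x 2*x 4^3*x 5 + ((274102)/223155)*x 2*x 4^4 + ((41904046)/70293825)*x 2*x 3^3*x 5 + ((42475423)/20083950)*x 2*x 3^3*x 4 + ((-31340969)/19391400)*x 2^2*x 3^2*x 5 + ((262664144)/70293825)*x 2^2*x 3^2*x 4 + ((-1531127)/495900)*x 2^3*x 3*x 5 + ((46749589)/23431275)*x 2^3*x 3*x 4 + ((-46749589)/15620850)*x 2^4*x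 5 + ((-31444561)/20827800)*x 1*x 3^2*x 5^2 + ((-83493901)/56235060)*x 1*x 3^2*x 4*x 5 + ((53395763)/28117530)*x 1*x 3^2*x 4^2 + ((206117701)/281175300)*x 1*x 2*x 3*x 5^2 + ((-136637353)/70293825)*x 1*x 2*x 3*x 4*x 5 + ((34618637)/23431275)*x 1*x 2*x 3*x 4^2 + ((-58113743)/93725100)*x 1*x 2^2*x 5^2 + ((-13052362)/4686255)*x 1*x 2^2*x 4*x 5 + ((56842913)/46862550)*x 1*x 2^2*x 4^2 + ((-2536645)/5623506)*x 1^2*x 5^3 + ((-18807221)/8033580)*x 1^2*x 4*x 5^2 + ((-58759693)/28117530)*x 1^2*x 4^2*x 5 + ((8129629)/4016790)*x 1^2*x 4^3 + ((7)/225)*x 1^3*x 3*x 5 + ((2)/225)*x 1^3*x 3*x 4 + ((2)/225)*x 1^3*x 2*x 5 + ((7)/225)*x 1^3*x 2*x 4 + ((1)/15)*x 1^5 + ((7824533)/18745020)*x 0*x 3^2*x 5^2 + ((-11231447)/28117530)*x 0*x 3^2*x 4*x 5 + ((73370719)/140587650)*x 0*x 3^2*x 4^2 + ((33926792)/14058765)*x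 0*x 2*x 3*x 5^2 + ((-23107996)/70293825)*x 0*x 2*x 3*x 4*x 5 + ((-869572)/4686255)*x 0*x 2*x 3*x 4^2 + ((2406266)/1233225)*x 0*x 2^2*x 5^2 + ((-80849)/133893)*x 0*x 2^2*x 4*x 5 + ((-592391)/1562085)*x 0*x 2^2*x 4^2 + ((2536645)/11247012)*x 0*x 1*x 5^3 + ((-14649457)/28117530)*x 0*x 1*x 4*x 5^2 + ((-50997601)/28117530)*x 0*x 1*x 4^2*x 5 + ((16259258)/14058765)*x 0*x 1*x 4^3 + ((-49)/150)*x 0*x 1^2*x 3*x 5 + ((-4)/25)*x 0*x 1^2*x 3*x 4 + ((-4)/25)*x 0*x 1^2*x 2*x 5 + ((-49)/150)*x 0*x 1^2*x 2*x 4 + ((-1)/30)*x 0*x 1^4 + ((2)/9)*x 0^2*x 1*x 3*x 5 + ((1)/9)*x 0^2*x 1*x 3*x 4 + ((1)/9)*x 0^2*x 1*x 2*x 5 + ((2)/9)*x 0^2*x 1*x 2*x 4 + ((-1)/9)*x 0^3*x 3*x 5 + ((-1)/18)*x 0^3*x 3*x 4 + ((-1)/18)*x 0^3*x 2*x 5 +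 ((-1)/9)*x 0^3*x 2*x 4 + ((1)/12)*x 0^3*x 1^2 + ((-1)/6)*x 0^4*x 1 + ((1)/6)*x 0^5) * h0 + (((22237279)/28117530)*x 3*x 5^4 + ((17778749)/14058765)*x 3*x 4*x 5^3 + ((4518179)/2811753)*x 3*x 4^2*x 5^2 + ((721016)/739935)*x 3*x 4^3*x 5 + ((11381348)/14058765)*x 3*x 4^4 + ((2377427)/1874502)*x 3^4*x 5 + ((-291433981)/93725100)*x 3^4*x 4 + ((1852594)/1562085)*x 2*x 4*x 5^3 + ((260878)/223155)*x 2*x 4^2*x 5^2 + ((-8)/315)*x 2*x 4^3*x 5 + ((-3758084)/1562085)*x 2*x 4^4 + ((71682008)/70293825)*x 2*x 3^3*x 5 + ((-361856861)/70293825)*x 2*x 3^3*x 4 + ((913282781)/281175300)*x 2^2*x 3^2*x 5 + ((-523130948)/70293825)*x 2^2*x 3^2*x 4 + ((1531127)/247950)*x 2^3*x 3*x 5 + ((-93499178)/23431275)*x 2^3*x 3*x 4 + ((46749589)/7810425)*x 2^4*x 5 + ((305705579)/93725100)*x 1*x 3^2*x 5^2 + ((4929863)/3124170)*x 1*x 3^2*x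 4*x 5 + ((-68007332)/23431275)*x 1*x 3^2*x 4^2 + ((129702313)/46862550)*x 1*x 2*x 3*x 5^2 + ((4552582)/2603475)*x 1*x 2*x 3*x 4*x 5 + ((-91818194)/23431275)*x 1*x 2*x 3*x 4^2 + ((33435337)/6694650)*x 1*x 2^2*x 5^2 + ((5889418)/1562085)*x 1*x 2^2*x 4*x 5 + ((-88499843)/23431275)*x 1*x 2^2*x 4^2 + ((2536645)/1874502)*x 1^2*x 5^3 + ((34117211)/9372510)*x 1^2*x 4*x 5^2 + ((2587364)/4686255)*x 1^2*x 4^2*x 5 + ((-8129629)/4686255)*x 1^2*x 4^3 + ((-11)/225)*x 1^3*x 3*x 5 + ((-1)/225)*x 1^3*x 3*x 4 + ((-1)/225)*x 1^3*x 2*x 5 + ((-11)/225)*x 1^3*x 2*x 4 + ((-1)/30)*x 1^5 + ((-6436013)/9372510)*x 0*x 3^2*x 5^2 + ((13314227)/14058765)*x 0*x 3^2*x 4*x 5 + ((-70767244)/70293825)*x 0*x 3^2*x 4^2 + ((-65770804)/14058765)*x 0*x 2*x 3*x 5^2 + ((72250742)/70293825)*x 0*x 2*x 3*x 4*x 5 +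 ((2433404)/4686255)*x 0*x 2*x 3*x 4^2 + ((-4766857)/1233225)*x 0*x 2^2*x 5^2 + ((181534)/133893)*x 0*x 2^2*x 4*x 5 + ((1416202)/1562085)*x 0*x 2^2*x 4^2 + ((-2536645)/5623506)*x 0*x 1*x 5^3 + ((14649457)/14058765)*x 0*x 1*x 4*x 5^2 + ((50997601)/14058765)*x 0*x 1*x 4^2*x 5 + ((-32518516)/14058765)*x 0*x 1*x 4^3 + ((47)/225)*x 0*x 1^2*x 3*x 5 + ((22)/225)*x 0*x 1^2*x 3*x 4 + ((22)/225)*x 0*x 1^2*x 2*x 5 + ((47)/225)*x 0*x 1^2*x 2*x 4 + ((-1)/60)*x 0*x 1^4) * h1 + (((191130259)/48201480)*x 3^3*x 5^2 + ((1080859849)/843525900)*x 3^3*x 4*x 5 + ((602560223)/168705180)*x 3^3*x 4^2 + ((-216084898)/70293825)*x 2*x 3^2*x 5^2 + ((-970836347)/281175300)*x 2*x 3^2*x 4*x 5 + ((7471523)/2231550)*x 2*x 3^2*x 4^2 + ((-110619497)/22198050)*x 2^2*x 3*x 5^2 + ((-1073663827)/210881475)*x 2^2*x 3*x 4*x 5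 + ((364830209)/210881475)*x 2^2*x 3*x 4^2 + ((-138639682)/23431275)*x 2^3*x 5^2 + ((-16174493)/7810425)*x 2^3*x 4*x 5 + ((889931)/669465)*x 2^3*x 4^2 + ((-1297009)/12050370)*x 1*x 3*x 5^3 + ((8496284)/14058765)*x 1*x 3*x 4*x 5^2 + ((-1829756)/14058765)*x 1*x 3*x 4^2*x 5 + ((90405799)/84352590)*x 1*x 3*x 4^3 + ((38771479)/10413900)*x 1*x 3^4 + ((-58342835)/33741036)*x 1*x 2*x 5^3 + ((-243746)/44631)*x 1*x 2*x 4*x 5^2 + ((-5370049)/28117530)*x 1*x 2*x 4^2*x 5 + ((57350011)/42176295)*x 1*x 2*x 4^3 + ((7776397)/1562085)*x 1*x 2*x 3^3 + ((9685993)/1071144)*x 1*x 2^2*x 3^2 + ((132675943)/18745020)*x 1*x 2^3*x 3 + ((46749589)/15620850)*x 1*x 2^4 + ((-51670594)/23431275)*x 1^2*x 3^2*x 5 + ((488496163)/187450200)*x 1^2*x 3^2*x 4 + ((-268470407)/93725100)*x 1^2*x 2*x 3*x 5 + ((1531127)/495900)*x 1^2*x 2*x 3*x 4 + ((-46749589)/10413900)*x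 1^2*x 2^2*x 5 + ((46749589)/15620850)*x 1^2*x 2^2*x 4 + ((-12683225)/7498008)*x 1^3*x 5^2 + ((-170111)/59508)*x 1^3*x 4*x 5 + ((8129629)/3749004)*x 1^3*x 4^2 + ((318109)/231420)*x 0*x 3*x 5^3 + ((2379527)/1338930)*x 0*x 3*x 4*x 5^2 + ((4872503)/4686255)*x 0*x 3*x 4^2*x 5 + ((-174019)/104139)*x 0*x 3*x 4^3 + ((4345315)/3749004)*x 0*x 3^4 + ((-4)/105)*x 0*x 2*x 4^3 + ((270998)/133893)*x 0*x 2*x 3^3 + ((-109867)/4686255)*x 0*x 2^2*x 3^2) * h2 + (((-22818559)/6025185)*x 3^3*x 5^2 + ((-3240631637)/843525900)*x 3^3*x 4*x 5 + ((-539893847)/210881475)*x 3^3*x 4^2 + ((-228015299)/281175300)*x 2*x 3^2*x 5^2 + ((55671559)/14058765)*x 2*x 3^2*x 4*x 5 + ((-15613313)/23431275)*x 2*x 3^2*x 4^2 + ((1657020919)/421762950)*x 2^2*x 3*x 5^2 + ((853158731)/210881475)*x 2^2*x 3*x 4*x 5 + ((-169003888)/210881475)*x 2^2*x 3*x 4^2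 + ((4725193)/807975)*x 2^3*x 5^2 + ((32348986)/7810425)*x 2^3*x 4*x 5 + ((-1779862)/669465)*x 2^3*x 4^2 + ((-2497937)/2219805)*x 1*x 3*x 5^3 + ((-15314647)/28117530)*x 1*x 3*x 4*x 5^2 + ((-8833082)/4686255)*x 1*x 3*x 4^2*x 5 + ((-65766238)/42176295)*x 1*x 3*x 4^3 + ((-10337357)/2975400)*x 1*x 3^4 + ((10146580)/8435259)*x 1*x 2*x 5^3 + ((4393132)/2008395)*x 1*x 2*x 4*x 5^2 + ((12171854)/14058765)*x 1*x 2*x 4^2*x 5 + ((5127952)/6025185)*x 1*x 2*x 4^3 + ((-199531709)/46862550)*x 1*x 2*x 3^3 + ((-650984219)/93725100)*x 1*x 2^2*x 3^2 + ((-382882181)/46862550)*x 1*x 2^3*x 3 + ((-46749589)/7810425)*x 1*x 2^4 + ((-21976159)/37490040)*x 1^2*x 3^2*x 5 + ((27257539)/18745020)*x 1^2*x 2*x 3*x 5 + ((633193)/3124170)*x 0*x 3*x 5^3 + ((-7064989)/4686255)*x 0*x 3^4 + ((-2503394)/937251)*x 0*x 2*x 3^3) * h3 + (((4339529)/8435259)*x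 3^2*x 5^3 + ((7360169)/14058765)*x 3^2*x 4*x 5^2 + ((-7614059)/14058765)*x 3^2*x 4^2*x 5 + ((-70839737)/84352590)*x 3^2*x 4^3 + ((5742049)/2499336)*x 3^5 + ((-1114181)/8435259)*x 2*x 3*x 5^3 + ((225808)/161595)*x 2*x 3*x 4*x 5^2 + ((-891277)/1479870)*x 2*x 3*x 4^2*x 5 + ((1557208)/2219805)*x 2*x 3*x 4^3 + ((4929419)/6248340)*x 2*x 3^4 + ((-1852594)/1562085)*x 2^2*x 4*x 5^2 + ((1879042)/1562085)*x 2^2*x 4^2*x 5 + ((-16)/945)*x 2^2*x 4^3 + ((-2114341)/2082780)*x 2^2*x 3^3 + ((109867)/3124170)*x 2^3*x 3^2 + ((-419765)/312417)*x 1*x 3^3*x 5 + ((2098825)/624834)*x 1*x 3^3*x 4) * h4 + (((1166750)/8435259)*x 3^2*x 5^3 + ((-1723483)/28117530)*x 3^2*x 4*x 5^2 + ((18613)/133893)*x 3^2*x 4^2*x 5 + ((5372273)/42176295)*x 3^2*x 4^3 + ((1520773)/6248340)*x 3^5 + ((-83477)/634230)*x 2*x 3*x 5^3 + ((-293801)/2008395)*x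 2*x 3*x 4*x 5^2 + ((-1179187)/2008395)*x 2*x 3*x 4^2*x 5 + ((-21066572)/42176295)*x 2*x 3*x 4^3 + ((617741)/3124170)*x 2*x 3^4) * h5
  have hz1 : x 1 ^ 7 = 0 := by
    linear_combination (norm := ring1) (((11381348)/14058765)*x 3*x 5^4 + ((721016)/739935)*x 3*x 4*x 5^3 + ((4518179)/2811753)*x 3*x 4^2*x 5^2 + ((17778749)/14058765)*x 3*x 4^3*x 5 + ((22237279)/28117530)*x 3*x 4^4 + ((-291433981)/93725100)*x 3^4*x 5 + ((2377427)/1874502)*x 3^4*x 4 + ((-3758084)/1562085)*x 2*x 5^4 + ((-8)/315)*x 2*x 4*x 5^3 + ((260878)/223155)*x 2*x 4^2*x 5^2 + ((1852594)/1562085)*x 2*x 4^3*x 5 + ((-361856861)/70293825)*x 2*x 3^3*x 5 + ((71682008)/70293825)*x 2*x 3^3*x 4 + ((-523130948)/70293825)*x 2^2*x 3^2*x 5 + ((913282781)/281175300)*x 2^2*x 3^2*x 4 + ((-93499178)/23431275)*x 2^3*x 3*x 5 + ((1531127)/247950)*x 2^3*x 3*x 4 + ((46749589)/7810425)*x 2^4*x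 4 + ((-70767244)/70293825)*x 1*x 3^2*x 5^2 + ((13314227)/14058765)*x 1*x 3^2*x 4*x 5 + ((-6436013)/9372510)*x 1*x 3^2*x 4^2 + ((2433404)/4686255)*x 1*x 2*x 3*x 5^2 + ((72250742)/70293825)*x 1*x 2*x 3*x 4*x 5 + ((-65770804)/14058765)*x 1*x 2*x 3*x 4^2 + ((1416202)/1562085)*x 1*x 2^2*x 5^2 + ((181534)/133893)*x 1*x 2^2*x 4*x 5 + ((-4766857)/1233225)*x 1*x 2^2*x 4^2 + ((-68007332)/23431275)*x 0*x 3^2*x 5^2 + ((4929863)/3124170)*x 0*x 3^2*x 4*x 5 + ((305705579)/93725100)*x 0*x 3^2*x 4^2 + ((-91818194)/23431275)*x 0*x 2*x 3*x 5^2 + ((4552582)/2603475)*x 0*x 2*x 3*x 4*x 5 + ((129702313)/46862550)*x 0*x 2*x 3*x 4^2 + ((-88499843)/23431275)*x 0*x 2^2*x 5^2 + ((5889418)/1562085)*x 0*x 2^2*x 4*x 5 + ((33435337)/6694650)*x 0*x 2^2*x 4^2 + ((-32518516)/14058765)*x 0*x 1*x 5^3 + ((50997601)/14058765)*x 0*x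 1*x 4*x 5^2 + ((14649457)/14058765)*x 0*x 1*x 4^2*x 5 + ((-2536645)/5623506)*x 0*x 1*x 4^3 + ((-8129629)/4686255)*x 0^2*x 5^3 + ((2587364)/4686255)*x 0^2*x 4*x 5^2 + ((34117211)/9372510)*x 0^2*x 4^2*x 5 + ((2536645)/1874502)*x 0^2*x 4^3 + ((22)/225)*x 0^2*x 1*x 3*x 5 + ((47)/225)*x 0^2*x 1*x 3*x 4 + ((47)/225)*x 0^2*x 1*x 2*x 5 + ((22)/225)*x 0^2*x 1*x 2*x 4 + ((-1)/225)*x 0^3*x 3*x 5 + ((-11)/225)*x 0^3*x 3*x 4 + ((-11)/225)*x 0^3*x 2*x 5 + ((-1)/225)*x 0^3*x 2*x 4 + ((-1)/60)*x 0^4*x 1 + ((-1)/30)*x 0^5) * h0 + (((9971036)/14058765)*x 3*x 5^4 + ((-8763803)/14058765)*x 3*x 4*x 5^3 + ((-21883093)/9372510)*x 3*x 4^2*x 5^2 + ((-31050923)/14058765)*x 3*x 4^3*x 5 + ((-13900606)/14058765)*x 3*x 4^4 + ((240790001)/187450200)*x 3^4*x 5 + ((-24113)/1562085)*x 3^4*x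 4 + ((274102)/223155)*x 2*x 5^4 + ((8)/315)*x 2*x 4*x 5^3 + ((-130439)/223155)*x 2*x 4^2*x 5^2 + ((-926297)/1562085)*x 2*x 4^3*x 5 + ((42475423)/20083950)*x 2*x 3^3*x 5 + ((41904046)/70293825)*x 2*x 3^3*x 4 + ((262664144)/70293825)*x 2^2*x 3^2*x 5 + ((-31340969)/19391400)*x 2^2*x 3^2*x 4 + ((46749589)/23431275)*x 2^3*x 3*x 5 + ((-1531127)/495900)*x 2^3*x 3*x 4 + ((-46749589)/15620850)*x 2^4*x 4 + ((73370719)/140587650)*x 1*x 3^2*x 5^2 + ((-11231447)/28117530)*x 1*x 3^2*x 4*x 5 + ((7824533)/18745020)*x 1*x 3^2*x 4^2 + ((-869572)/4686255)*x 1*x 2*x 3*x 5^2 + ((-23107996)/70293825)*x 1*x 2*x 3*x 4*x 5 + ((33926792)/14058765)*x 1*x 2*x 3*x 4^2 + ((-592391)/1562085)*x 1*x 2^2*x 5^2 + ((-80849)/133893)*x 1*x 2^2*x 4*x 5 + ((2406266)/1233225)*x 1*x 2^2*x 4^2 + ((-1)/18)*x 1^3*x 3*x 5 + ((-1)/9)*x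 1^3*x 3*x 4 + ((-1)/9)*x 1^3*x 2*x 5 + ((-1)/18)*x 1^3*x 2*x 4 + ((1)/6)*x 1^5 + ((53395763)/28117530)*x 0*x 3^2*x 5^2 + ((-83493901)/56235060)*x 0*x 3^2*x 4*x 5 + ((-31444561)/20827800)*x 0*x 3^2*x 4^2 + ((34618637)/23431275)*x 0*x 2*x 3*x 5^2 + ((-136637353)/70293825)*x 0*x 2*x 3*x 4*x 5 + ((206117701)/281175300)*x 0*x 2*x 3*x 4^2 + ((56842913)/46862550)*x 0*x 2^2*x 5^2 + ((-13052362)/4686255)*x 0*x 2^2*x 4*x 5 + ((-58113743)/93725100)*x 0*x 2^2*x 4^2 + ((16259258)/14058765)*x 0*x 1*x 5^3 + ((-50997601)/28117530)*x 0*x 1*x 4*x 5^2 + ((-14649457)/28117530)*x 0*x 1*x 4^2*x 5 + ((2536645)/11247012)*x 0*x 1*x 4^3 + ((1)/9)*x 0*x 1^2*x 3*x 5 + ((2)/9)*x 0*x 1^2*x 3*x 4 + ((2)/9)*x 0*x 1^2*x 2*x 5 + ((1)/9)*x 0*x 1^2*x 2*x 4 + ((-1)/6)*x 0*x 1^4 +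 ((8129629)/4016790)*x 0^2*x 5^3 + ((-58759693)/28117530)*x 0^2*x 4*x 5^2 + ((-18807221)/8033580)*x 0^2*x 4^2*x 5 + ((-2536645)/5623506)*x 0^2*x 4^3 + ((-4)/25)*x 0^2*x 1*x 3*x 5 + ((-49)/150)*x 0^2*x 1*x 3*x 4 + ((-49)/150)*x 0^2*x 1*x 2*x 5 + ((-4)/25)*x 0^2*x 1*x 2*x 4 + ((1)/12)*x 0^2*x 1^3 + ((2)/225)*x 0^3*x 3*x 5 + ((7)/225)*x 0^3*x 3*x 4 + ((7)/225)*x 0^3*x 2*x 5 + ((2)/225)*x 0^3*x 2*x 4 + ((-1)/30)*x 0^4*x 1 + ((1)/15)*x 0^5) * h1 + (((602560223)/168705180)*x 3^3*x 5^2 + ((1080859849)/843525900)*x 3^3*x 4*x 5 + ((191130259)/48201480)*x 3^3*x 4^2 + ((7471523)/2231550)*x 2*x 3^2*x 5^2 + ((-970836347)/281175300)*x 2*x 3^2*x 4*x 5 + ((-216084898)/70293825)*x 2*x 3^2*x 4^2 + ((364830209)/210881475)*x 2^2*x 3*x 5^2 + ((-1073663827)/210881475)*x 2^2*x 3*x 4*x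 5 + ((-110619497)/22198050)*x 2^2*x 3*x 4^2 + ((889931)/669465)*x 2^3*x 5^2 + ((-16174493)/7810425)*x 2^3*x 4*x 5 + ((-138639682)/23431275)*x 2^3*x 4^2 + ((-174019)/104139)*x 1*x 3*x 5^3 + ((4872503)/4686255)*x 1*x 3*x 4*x 5^2 + ((2379527)/1338930)*x 1*x 3*x 4^2*x 5 + ((318109)/231420)*x 1*x 3*x 4^3 + ((4345315)/3749004)*x 1*x 3^4 + ((-4)/105)*x 1*x 2*x 5^3 + ((270998)/133893)*x 1*x 2*x 3^3 + ((-109867)/4686255)*x 1*x 2^2*x 3^2 + ((90405799)/84352590)*x 0*x 3*x 5^3 + ((-1829756)/14058765)*x 0*x 3*x 4*x 5^2 + ((8496284)/14058765)*x 0*x 3*x 4^2*x 5 + ((-1297009)/12050370)*x 0*x 3*x 4^3 + ((38771479)/10413900)*x 0*x 3^4 + ((57350011)/42176295)*x 0*x 2*x 5^3 + ((-5370049)/28117530)*x 0*x 2*x 4*x 5^2 + ((-243746)/44631)*x 0*x 2*x 4^2*x 5 + ((-58342835)/33741036)*x 0*x 2*x 4^3 + ((7776397)/1562085)*x 0*x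 2*x 3^3 + ((9685993)/1071144)*x 0*x 2^2*x 3^2 + ((132675943)/18745020)*x 0*x 2^3*x 3 + ((46749589)/15620850)*x 0*x 2^4 + ((488496163)/187450200)*x 0^2*x 3^2*x 5 + ((-51670594)/23431275)*x 0^2*x 3^2*x 4 + ((1531127)/495900)*x 0^2*x 2*x 3*x 5 + ((-268470407)/93725100)*x 0^2*x 2*x 3*x 4 + ((46749589)/15620850)*x 0^2*x 2^2*x 5 + ((-46749589)/10413900)*x 0^2*x 2^2*x 4 + ((8129629)/3749004)*x 0^3*x 5^2 + ((-170111)/59508)*x 0^3*x 4*x 5 + ((-12683225)/7498008)*x 0^3*x 4^2) * h2 + (((-539893847)/210881475)*x 3^3*x 5^2 + ((-3240631637)/843525900)*x 3^3*x 4*x 5 + ((-22818559)/6025185)*x 3^3*x 4^2 + ((-15613313)/23431275)*x 2*x 3^2*x 5^2 + ((55671559)/14058765)*x 2*x 3^2*x 4*x 5 + ((-228015299)/281175300)*x 2*x 3^2*x 4^2 + ((-169003888)/210881475)*x 2^2*x 3*x 5^2 + ((853158731)/210881475)*x 2^2*x 3*x 4*x 5 + ((1657020919)/421762950)*x 2^2*x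 3*x 4^2 + ((-1779862)/669465)*x 2^3*x 5^2 + ((32348986)/7810425)*x 2^3*x 4*x 5 + ((4725193)/807975)*x 2^3*x 4^2 + ((633193)/3124170)*x 1*x 3*x 4^3 + ((-7064989)/4686255)*x 1*x 3^4 + ((-2503394)/937251)*x 1*x 2*x 3^3 + ((-65766238)/42176295)*x 0*x 3*x 5^3 + ((-8833082)/4686255)*x 0*x 3*x 4*x 5^2 + ((-15314647)/28117530)*x 0*x 3*x 4^2*x 5 + ((-2497937)/2219805)*x 0*x 3*x 4^3 + ((-10337357)/2975400)*x 0*x 3^4 + ((5127952)/6025185)*x 0*x 2*x 5^3 + ((12171854)/14058765)*x 0*x 2*x 4*x 5^2 + ((4393132)/2008395)*x 0*x 2*x 4^2*x 5 + ((10146580)/8435259)*x 0*x 2*x 4^3 + ((-199531709)/46862550)*x 0*x 2*x 3^3 + ((-650984219)/93725100)*x 0*x 2^2*x 3^2 + ((-382882181)/46862550)*x 0*x 2^3*x 3 + ((-46749589)/7810425)*x 0*x 2^4 + ((-21976159)/37490040)*x 0^2*x 3^2*x 4 + ((27257539)/18745020)*x 0^2*x 2*x 3*x 4) * h3 + (((5372273)/42176295)*x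 3^2*x 5^3 + ((18613)/133893)*x 3^2*x 4*x 5^2 + ((-1723483)/28117530)*x 3^2*x 4^2*x 5 + ((1166750)/8435259)*x 3^2*x 4^3 + ((1520773)/6248340)*x 3^5 + ((-21066572)/42176295)*x 2*x 3*x 5^3 + ((-1179187)/2008395)*x 2*x 3*x 4*x 5^2 + ((-293801)/2008395)*x 2*x 3*x 4^2*x 5 + ((-83477)/634230)*x 2*x 3*x 4^3 + ((617741)/3124170)*x 2*x 3^4) * h4 + (((-70839737)/84352590)*x 3^2*x 5^3 + ((-7614059)/14058765)*x 3^2*x 4*x 5^2 + ((7360169)/14058765)*x 3^2*x 4^2*x 5 + ((4339529)/8435259)*x 3^2*x 4^3 + ((5742049)/2499336)*x 3^5 + ((1557208)/2219805)*x 2*x 3*x 5^3 + ((-891277)/1479870)*x 2*x 3*x 4*x 5^2 + ((225808)/161595)*x 2*x 3*x 4^2*x 5 + ((-1114181)/8435259)*x 2*x 3*x 4^3 + ((4929419)/6248340)*x 2*x 3^4 + ((-16)/945)*x 2^2*x 5^3 + ((1879042)/1562085)*x 2^2*x 4*x 5^2 + ((-1852594)/1562085)*x 2^2*x 4^2*x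 5 + ((-2114341)/2082780)*x 2^2*x 3^3 + ((109867)/3124170)*x 2^3*x 3^2 + ((2098825)/624834)*x 0*x 3^3*x 5 + ((-419765)/312417)*x 0*x 3^3*x 4) * h5
  have hz2 : x 2 ^ 7 = 0 := by
    linear_combination (norm := ring1) (((-12683225)/7498008)*x 3^3*x 5^2 + ((-170111)/59508)*x 3^3*x 4*x 5 + ((8129629)/3749004)*x 3^3*x 4^2 + ((-1297009)/12050370)*x 1*x 3*x 5^3 + ((8496284)/14058765)*x 1*x 3*x 4*x 5^2 + ((-1829756)/14058765)*x 1*x 3*x 4^2*x 5 + ((90405799)/84352590)*x 1*x 3*x 4^3 + ((318109)/231420)*x 1*x 2*x 5^3 + ((2379527)/1338930)*x 1*x 2*x 4*x 5^2 + ((4872503)/4686255)*x 1*x 2*x 4^2*x 5 + ((-174019)/104139)*x 1*x 2*x 4^3 + ((-51670594)/23431275)*x 1^2*x 3^2*x 5 + ((488496163)/187450200)*x 1^2*x 3^2*x 4 + ((191130259)/48201480)*x 1^3*x 5^2 + ((1080859849)/843525900)*x 1^3*x 4*x 5 + ((602560223)/168705180)*x 1^3*x 4^2 + ((38771479)/10413900)*x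 1^4*x 3 + ((4345315)/3749004)*x 1^4*x 2 + ((-58342835)/33741036)*x 0*x 3*x 5^3 + ((-243746)/44631)*x 0*x 3*x 4*x 5^2 + ((-5370049)/28117530)*x 0*x 3*x 4^2*x 5 + ((57350011)/42176295)*x 0*x 3*x 4^3 + ((-4)/105)*x 0*x 2*x 4^3 + ((-268470407)/93725100)*x 0*x 1*x 3^2*x 5 + ((1531127)/495900)*x 0*x 1*x 3^2*x 4 + ((-216084898)/70293825)*x 0*x 1^2*x 5^2 + ((-970836347)/281175300)*x 0*x 1^2*x 4*x 5 + ((7471523)/2231550)*x 0*x 1^2*x 4^2 + ((7776397)/1562085)*x 0*x 1^3*x 3 + ((270998)/133893)*x 0*x 1^3*x 2 + ((-46749589)/10413900)*x 0^2*x 3^2*x 5 + ((46749589)/15620850)*x 0^2*x 3^2*x 4 + ((-110619497)/22198050)*x 0^2*x 1*x 5^2 + ((-1073663827)/210881475)*x 0^2*x 1*x 4*x 5 + ((364830209)/210881475)*x 0^2*x 1*x 4^2 + ((9685993)/1071144)*x 0^2*x 1^2*x 3 + ((-109867)/4686255)*x 0^2*x 1^2*x 2 + ((-138639682)/23431275)*x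 0^3*x 5^2 + ((-16174493)/7810425)*x 0^3*x 4*x 5 + ((889931)/669465)*x 0^3*x 4^2 + ((132675943)/18745020)*x 0^3*x 1*x 3 + ((46749589)/15620850)*x 0^4*x 3) * h0 + (((-2497937)/2219805)*x 1*x 3*x 5^3 + ((-15314647)/28117530)*x 1*x 3*x 4*x 5^2 + ((-8833082)/4686255)*x 1*x 3*x 4^2*x 5 + ((-65766238)/42176295)*x 1*x 3*x 4^3 + ((633193)/3124170)*x 1*x 2*x 5^3 + ((-21976159)/37490040)*x 1^2*x 3^2*x 5 + ((-22818559)/6025185)*x 1^3*x 5^2 + ((-3240631637)/843525900)*x 1^3*x 4*x 5 + ((-539893847)/210881475)*x 1^3*x 4^2 + ((-10337357)/2975400)*x 1^4*x 3 + ((-7064989)/4686255)*x 1^4*x 2 + ((10146580)/8435259)*x 0*x 3*x 5^3 + ((4393132)/2008395)*x 0*x 3*x 4*x 5^2 + ((12171854)/14058765)*x 0*x 3*x 4^2*x 5 + ((5127952)/6025185)*x 0*x 3*x 4^3 + ((27257539)/18745020)*x 0*x 1*x 3^2*x 5 + ((-228015299)/281175300)*x 0*x 1^2*x 5^2 + ((55671559)/14058765)*x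 0*x 1^2*x 4*x 5 + ((-15613313)/23431275)*x 0*x 1^2*x 4^2 + ((-199531709)/46862550)*x 0*x 1^3*x 3 + ((-2503394)/937251)*x 0*x 1^3*x 2 + ((1657020919)/421762950)*x 0^2*x 1*x 5^2 + ((853158731)/210881475)*x 0^2*x 1*x 4*x 5 + ((-169003888)/210881475)*x 0^2*x 1*x 4^2 + ((-650984219)/93725100)*x 0^2*x 1^2*x 3 + ((4725193)/807975)*x 0^3*x 5^2 + ((32348986)/7810425)*x 0^3*x 4*x 5 + ((-1779862)/669465)*x 0^3*x 4^2 + ((-382882181)/46862550)*x 0^3*x 1*x 3 + ((-46749589)/7810425)*x 0^4*x 3) * h1 + (((-2536645)/5623506)*x 3^2*x 5^3 + ((-18807221)/8033580)*x 3^2*x 4*x 5^2 + ((-58759693)/28117530)*x 3^2*x 4^2*x 5 + ((8129629)/4016790)*x 3^2*x 4^3 + ((1)/15)*x 3^5 + ((2536645)/11247012)*x 2*x 3*x 5^3 + ((-14649457)/28117530)*x 2*x 3*x 4*x 5^2 + ((-50997601)/28117530)*x 2*x 3*x 4^2*x 5 + ((16259258)/14058765)*x 2*x 3*x 4^3 +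 ((-1)/30)*x 2*x 3^4 + ((1)/12)*x 2^3*x 3^2 + ((-1)/6)*x 2^4*x 3 + ((1)/6)*x 2^5 + ((-13900606)/14058765)*x 1*x 5^4 + ((-31050923)/14058765)*x 1*x 4*x 5^3 + ((-21883093)/9372510)*x 1*x 4^2*x 5^2 + ((-8763803)/14058765)*x 1*x 4^3*x 5 + ((9971036)/14058765)*x 1*x 4^4 + ((7)/225)*x 1*x 3^3*x 5 + ((2)/225)*x 1*x 3^3*x 4 + ((-49)/150)*x 1*x 2*x 3^2*x 5 + ((-4)/25)*x 1*x 2*x 3^2*x 4 + ((2)/9)*x 1*x 2^2*x 3*x 5 + ((1)/9)*x 1*x 2^2*x 3*x 4 + ((-1)/9)*x 1*x 2^3*x 5 + ((-1)/18)*x 1*x 2^3*x 4 + ((-31444561)/20827800)*x 1^2*x 3*x 5^2 + ((-83493901)/56235060)*x 1^2*x 3*x 4*x 5 + ((53395763)/28117530)*x 1^2*x 3*x 4^2 + ((7824533)/18745020)*x 1^2*x 2*x 5^2 + ((-11231447)/28117530)*x 1^2*x 2*x 4*x 5 + ((73370719)/140587650)*x 1^2*x 2*x 4^2 + ((-24113)/1562085)*x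 1^4*x 5 + ((240790001)/187450200)*x 1^4*x 4 + ((-926297)/1562085)*x 0*x 4*x 5^3 + ((-130439)/223155)*x 0*x 4^2*x 5^2 + ((8)/315)*x 0*x 4^3*x 5 + ((274102)/223155)*x 0*x 4^4 + ((2)/225)*x 0*x 3^3*x 5 + ((7)/225)*x 0*x 3^3*x 4 + ((-4)/25)*x 0*x 2*x 3^2*x 5 + ((-49)/150)*x 0*x 2*x 3^2*x 4 + ((1)/9)*x 0*x 2^2*x 3*x 5 + ((2)/9)*x 0*x 2^2*x 3*x 4 + ((-1)/18)*x 0*x 2^3*x 5 + ((-1)/9)*x 0*x 2^3*x 4 + ((206117701)/281175300)*x 0*x 1*x 3*x 5^2 + ((-136637353)/70293825)*x 0*x 1*x 3*x 4*x 5 + ((34618637)/23431275)*x 0*x 1*x 3*x 4^2 + ((33926792)/14058765)*x 0*x 1*x 2*x 5^2 + ((-23107996)/70293825)*x 0*x 1*x 2*x 4*x 5 + ((-869572)/4686255)*x 0*x 1*x 2*x 4^2 + ((41904046)/70293825)*x 0*x 1^3*x 5 + ((42475423)/20083950)*x 0*x 1^3*x 4 + ((-58113743)/93725100)*x 0^2*x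 3*x 5^2 + ((-13052362)/4686255)*x 0^2*x 3*x 4*x 5 + ((56842913)/46862550)*x 0^2*x 3*x 4^2 + ((2406266)/1233225)*x 0^2*x 2*x 5^2 + ((-80849)/133893)*x 0^2*x 2*x 4*x 5 + ((-592391)/1562085)*x 0^2*x 2*x 4^2 + ((-31340969)/19391400)*x 0^2*x 1^2*x 5 + ((262664144)/70293825)*x 0^2*x 1^2*x 4 + ((-1531127)/495900)*x 0^3*x 1*x 5 + ((46749589)/23431275)*x 0^3*x 1*x 4 + ((-46749589)/15620850)*x 0^4*x 5) * h2 + (((2536645)/1874502)*x 3^2*x 5^3 + ((34117211)/9372510)*x 3^2*x 4*x 5^2 + ((2587364)/4686255)*x 3^2*x 4^2*x 5 + ((-8129629)/4686255)*x 3^2*x 4^3 + ((-1)/30)*x 3^5 + ((-2536645)/5623506)*x 2*x 3*x 5^3 + ((14649457)/14058765)*x 2*x 3*x 4*x 5^2 + ((50997601)/14058765)*x 2*x 3*x 4^2*x 5 + ((-32518516)/14058765)*x 2*x 3*x 4^3 + ((-1)/60)*x 2*x 3^4 + ((22237279)/28117530)*x 1*x 5^4 + ((17778749)/14058765)*x 1*x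 4*x 5^3 + ((4518179)/2811753)*x 1*x 4^2*x 5^2 + ((721016)/739935)*x 1*x 4^3*x 5 + ((11381348)/14058765)*x 1*x 4^4 + ((-11)/225)*x 1*x 3^3*x 5 + ((-1)/225)*x 1*x 3^3*x 4 + ((47)/225)*x 1*x 2*x 3^2*x 5 + ((22)/225)*x 1*x 2*x 3^2*x 4 + ((305705579)/93725100)*x 1^2*x 3*x 5^2 + ((4929863)/3124170)*x 1^2*x 3*x 4*x 5 + ((-68007332)/23431275)*x 1^2*x 3*x 4^2 + ((-6436013)/9372510)*x 1^2*x 2*x 5^2 + ((13314227)/14058765)*x 1^2*x 2*x 4*x 5 + ((-70767244)/70293825)*x 1^2*x 2*x 4^2 + ((2377427)/1874502)*x 1^4*x 5 + ((-291433981)/93725100)*x 1^4*x 4 + ((1852594)/1562085)*x 0*x 4*x 5^3 + ((260878)/223155)*x 0*x 4^2*x 5^2 + ((-8)/315)*x 0*x 4^3*x 5 + ((-3758084)/1562085)*x 0*x 4^4 + ((-1)/225)*x 0*x 3^3*x 5 + ((-11)/225)*x 0*x 3^3*x 4 + ((22)/225)*x 0*x 2*x 3^2*x 5 + ((47)/225)*x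 0*x 2*x 3^2*x 4 + ((129702313)/46862550)*x 0*x 1*x 3*x 5^2 + ((4552582)/2603475)*x 0*x 1*x 3*x 4*x 5 + ((-91818194)/23431275)*x 0*x 1*x 3*x 4^2 + ((-65770804)/14058765)*x 0*x 1*x 2*x 5^2 + ((72250742)/70293825)*x 0*x 1*x 2*x 4*x 5 + ((2433404)/4686255)*x 0*x 1*x 2*x 4^2 + ((71682008)/70293825)*x 0*x 1^3*x 5 + ((-361856861)/70293825)*x 0*x 1^3*x 4 + ((33435337)/6694650)*x 0^2*x 3*x 5^2 + ((5889418)/1562085)*x 0^2*x 3*x 4*x 5 + ((-88499843)/23431275)*x 0^2*x 3*x 4^2 + ((-4766857)/1233225)*x 0^2*x 2*x 5^2 + ((181534)/133893)*x 0^2*x 2*x 4*x 5 + ((1416202)/1562085)*x 0^2*x 2*x 4^2 + ((913282781)/281175300)*x 0^2*x 1^2*x 5 + ((-523130948)/70293825)*x 0^2*x 1^2*x 4 + ((1531127)/247950)*x 0^3*x 1*x 5 + ((-93499178)/23431275)*x 0^3*x 1*x 4 + ((46749589)/7810425)*x 0^4*x 5) * h3 + (((4339529)/8435259)*x 1^2*x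 5^3 + ((7360169)/14058765)*x 1^2*x 4*x 5^2 + ((-7614059)/14058765)*x 1^2*x 4^2*x 5 + ((-70839737)/84352590)*x 1^2*x 4^3 + ((-419765)/312417)*x 1^3*x 3*x 5 + ((2098825)/624834)*x 1^3*x 3*x 4 + ((5742049)/2499336)*x 1^5 + ((-1114181)/8435259)*x 0*x 1*x 5^3 + ((225808)/161595)*x 0*x 1*x 4*x 5^2 + ((-891277)/1479870)*x 0*x 1*x 4^2*x 5 + ((1557208)/2219805)*x 0*x 1*x 4^3 + ((4929419)/6248340)*x 0*x 1^4 + ((-1852594)/1562085)*x 0^2*x 4*x 5^2 + ((1879042)/1562085)*x 0^2*x 4^2*x 5 + ((-16)/945)*x 0^2*x 4^3 + ((-2114341)/2082780)*x 0^2*x 1^3 + ((109867)/3124170)*x 0^3*x 1^2) * h4 + (((1166750)/8435259)*x 1^2*x 5^3 + ((-1723483)/28117530)*x 1^2*x 4*x 5^2 + ((18613)/133893)*x 1^2*x 4^2*x 5 + ((5372273)/42176295)*x 1^2*x 4^3 + ((1520773)/6248340)*x 1^5 + ((-83477)/634230)*x 0*x 1*x 5^3 + ((-293801)/2008395)*x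 0*x 1*x 4*x 5^2 + ((-1179187)/2008395)*x 0*x 1*x 4^2*x 5 + ((-21066572)/42176295)*x 0*x 1*x 4^3 + ((617741)/3124170)*x 0*x 1^4) * h5
  have hz3 : x 3 ^ 7 = 0 := by
    linear_combination (norm := ring1) (((8129629)/3749004)*x 2^3*x 5^2 + ((-170111)/59508)*x 2^3*x 4*x 5 + ((-12683225)/7498008)*x 2^3*x 4^2 + ((-174019)/104139)*x 1*x 3*x 5^3 + ((4872503)/4686255)*x 1*x 3*x 4*x 5^2 + ((2379527)/1338930)*x 1*x 3*x 4^2*x 5 + ((318109)/231420)*x 1*x 3*x 4^3 + ((90405799)/84352590)*x 1*x 2*x 5^3 + ((-1829756)/14058765)*x 1*x 2*x 4*x 5^2 + ((8496284)/14058765)*x 1*x 2*x 4^2*x 5 + ((-1297009)/12050370)*x 1*x 2*x 4^3 + ((488496163)/187450200)*x 1^2*x 2^2*x 5 + ((-51670594)/23431275)*x 1^2*x 2^2*x 4 + ((602560223)/168705180)*x 1^3*x 5^2 + ((1080859849)/843525900)*x 1^3*x 4*x 5 + ((191130259)/48201480)*x 1^3*x 4^2 + ((4345315)/3749004)*x 1^4*x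 3 + ((38771479)/10413900)*x 1^4*x 2 + ((-4)/105)*x 0*x 3*x 5^3 + ((57350011)/42176295)*x 0*x 2*x 5^3 + ((-5370049)/28117530)*x 0*x 2*x 4*x 5^2 + ((-243746)/44631)*x 0*x 2*x 4^2*x 5 + ((-58342835)/33741036)*x 0*x 2*x 4^3 + ((1531127)/495900)*x 0*x 1*x 2^2*x 5 + ((-268470407)/93725100)*x 0*x 1*x 2^2*x 4 + ((7471523)/2231550)*x 0*x 1^2*x 5^2 + ((-970836347)/281175300)*x 0*x 1^2*x 4*x 5 + ((-216084898)/70293825)*x 0*x 1^2*x 4^2 + ((270998)/133893)*x 0*x 1^3*x 3 + ((7776397)/1562085)*x 0*x 1^3*x 2 + ((46749589)/15620850)*x 0^2*x 2^2*x 5 + ((-46749589)/10413900)*x 0^2*x 2^2*x 4 + ((364830209)/210881475)*x 0^2*x 1*x 5^2 + ((-1073663827)/210881475)*x 0^2*x 1*x 4*x 5 + ((-110619497)/22198050)*x 0^2*x 1*x 4^2 + ((-109867)/4686255)*x 0^2*x 1^2*x 3 + ((9685993)/1071144)*x 0^2*x 1^2*x 2 + ((889931)/669465)*x 0^3*x 5^2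 + ((-16174493)/7810425)*x 0^3*x 4*x 5 + ((-138639682)/23431275)*x 0^3*x 4^2 + ((132675943)/18745020)*x 0^3*x 1*x 2 + ((46749589)/15620850)*x 0^4*x 2) * h0 + (((633193)/3124170)*x 1*x 3*x 4^3 + ((-65766238)/42176295)*x 1*x 2*x 5^3 + ((-8833082)/4686255)*x 1*x 2*x 4*x 5^2 + ((-15314647)/28117530)*x 1*x 2*x 4^2*x 5 + ((-2497937)/2219805)*x 1*x 2*x 4^3 + ((-21976159)/37490040)*x 1^2*x 2^2*x 4 + ((-539893847)/210881475)*x 1^3*x 5^2 + ((-3240631637)/843525900)*x 1^3*x 4*x 5 + ((-22818559)/6025185)*x 1^3*x 4^2 + ((-7064989)/4686255)*x 1^4*x 3 + ((-10337357)/2975400)*x 1^4*x 2 + ((5127952)/6025185)*x 0*x 2*x 5^3 + ((12171854)/14058765)*x 0*x 2*x 4*x 5^2 + ((4393132)/2008395)*x 0*x 2*x 4^2*x 5 + ((10146580)/8435259)*x 0*x 2*x 4^3 + ((27257539)/18745020)*x 0*x 1*x 2^2*x 4 + ((-15613313)/23431275)*x 0*x 1^2*x 5^2 + ((55671559)/14058765)*x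 0*x 1^2*x 4*x 5 + ((-228015299)/281175300)*x 0*x 1^2*x 4^2 + ((-2503394)/937251)*x 0*x 1^3*x 3 + ((-199531709)/46862550)*x 0*x 1^3*x 2 + ((-169003888)/210881475)*x 0^2*x 1*x 5^2 + ((853158731)/210881475)*x 0^2*x 1*x 4*x 5 + ((1657020919)/421762950)*x 0^2*x 1*x 4^2 + ((-650984219)/93725100)*x 0^2*x 1^2*x 2 + ((-1779862)/669465)*x 0^3*x 5^2 + ((32348986)/7810425)*x 0^3*x 4*x 5 + ((4725193)/807975)*x 0^3*x 4^2 + ((-382882181)/46862550)*x 0^3*x 1*x 2 + ((-46749589)/7810425)*x 0^4*x 2) * h1 + (((-32518516)/14058765)*x 2*x 3*x 5^3 + ((50997601)/14058765)*x 2*x 3*x 4*x 5^2 + ((14649457)/14058765)*x 2*x 3*x 4^2*x 5 + ((-2536645)/5623506)*x 2*x 3*x 4^3 + ((-8129629)/4686255)*x 2^2*x 5^3 + ((2587364)/4686255)*x 2^2*x 4*x 5^2 + ((34117211)/9372510)*x 2^2*x 4^2*x 5 + ((2536645)/1874502)*x 2^2*x 4^3 + ((-1)/60)*x 2^4*x 3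 + ((-1)/30)*x 2^5 + ((11381348)/14058765)*x 1*x 5^4 + ((721016)/739935)*x 1*x 4*x 5^3 + ((4518179)/2811753)*x 1*x 4^2*x 5^2 + ((17778749)/14058765)*x 1*x 4^3*x 5 + ((22237279)/28117530)*x 1*x 4^4 + ((22)/225)*x 1*x 2^2*x 3*x 5 + ((47)/225)*x 1*x 2^2*x 3*x 4 + ((-1)/225)*x 1*x 2^3*x 5 + ((-11)/225)*x 1*x 2^3*x 4 + ((-70767244)/70293825)*x 1^2*x 3*x 5^2 + ((13314227)/14058765)*x 1^2*x 3*x 4*x 5 + ((-6436013)/9372510)*x 1^2*x 3*x 4^2 + ((-68007332)/23431275)*x 1^2*x 2*x 5^2 + ((4929863)/3124170)*x 1^2*x 2*x 4*x 5 + ((305705579)/93725100)*x 1^2*x 2*x 4^2 + ((-291433981)/93725100)*x 1^4*x 5 + ((2377427)/1874502)*x 1^4*x 4 + ((-3758084)/1562085)*x 0*x 5^4 + ((-8)/315)*x 0*x 4*x 5^3 + ((260878)/223155)*x 0*x 4^2*x 5^2 + ((1852594)/1562085)*x 0*x 4^3*x 5 + ((47)/225)*x 0*x 2^2*x 3*x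 5 + ((22)/225)*x 0*x 2^2*x 3*x 4 + ((-11)/225)*x 0*x 2^3*x 5 + ((-1)/225)*x 0*x 2^3*x 4 + ((2433404)/4686255)*x 0*x 1*x 3*x 5^2 + ((72250742)/70293825)*x 0*x 1*x 3*x 4*x 5 + ((-65770804)/14058765)*x 0*x 1*x 3*x 4^2 + ((-91818194)/23431275)*x 0*x 1*x 2*x 5^2 + ((4552582)/2603475)*x 0*x 1*x 2*x 4*x 5 + ((129702313)/46862550)*x 0*x 1*x 2*x 4^2 + ((-361856861)/70293825)*x 0*x 1^3*x 5 + ((71682008)/70293825)*x 0*x 1^3*x 4 + ((1416202)/1562085)*x 0^2*x 3*x 5^2 + ((181534)/133893)*x 0^2*x 3*x 4*x 5 + ((-4766857)/1233225)*x 0^2*x 3*x 4^2 + ((-88499843)/23431275)*x 0^2*x 2*x 5^2 + ((5889418)/1562085)*x 0^2*x 2*x 4*x 5 + ((33435337)/6694650)*x 0^2*x 2*x 4^2 + ((-523130948)/70293825)*x 0^2*x 1^2*x 5 + ((913282781)/281175300)*x 0^2*x 1^2*x 4 + ((-93499178)/23431275)*x 0^3*x 1*x 5 + ((1531127)/247950)*x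 0^3*x 1*x 4 + ((46749589)/7810425)*x 0^4*x 4) * h2 + (((1)/6)*x 3^5 + ((16259258)/14058765)*x 2*x 3*x 5^3 + ((-50997601)/28117530)*x 2*x 3*x 4*x 5^2 + ((-14649457)/28117530)*x 2*x 3*x 4^2*x 5 + ((2536645)/11247012)*x 2*x 3*x 4^3 + ((-1)/6)*x 2*x 3^4 + ((8129629)/4016790)*x 2^2*x 5^3 + ((-58759693)/28117530)*x 2^2*x 4*x 5^2 + ((-18807221)/8033580)*x 2^2*x 4^2*x 5 + ((-2536645)/5623506)*x 2^2*x 4^3 + ((1)/12)*x 2^2*x 3^3 + ((-1)/30)*x 2^4*x 3 + ((1)/15)*x 2^5 + ((9971036)/14058765)*x 1*x 5^4 + ((-8763803)/14058765)*x 1*x 4*x 5^3 + ((-21883093)/9372510)*x 1*x 4^2*x 5^2 + ((-31050923)/14058765)*x 1*x 4^3*x 5 + ((-13900606)/14058765)*x 1*x 4^4 + ((-1)/18)*x 1*x 3^3*x 5 + ((-1)/9)*x 1*x 3^3*x 4 + ((1)/9)*x 1*x 2*x 3^2*x 5 + ((2)/9)*x 1*x 2*x 3^2*x 4 + ((-4)/25)*x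 1*x 2^2*x 3*x 5 + ((-49)/150)*x 1*x 2^2*x 3*x 4 + ((2)/225)*x 1*x 2^3*x 5 + ((7)/225)*x 1*x 2^3*x 4 + ((73370719)/140587650)*x 1^2*x 3*x 5^2 + ((-11231447)/28117530)*x 1^2*x 3*x 4*x 5 + ((7824533)/18745020)*x 1^2*x 3*x 4^2 + ((53395763)/28117530)*x 1^2*x 2*x 5^2 + ((-83493901)/56235060)*x 1^2*x 2*x 4*x 5 + ((-31444561)/20827800)*x 1^2*x 2*x 4^2 + ((240790001)/187450200)*x 1^4*x 5 + ((-24113)/1562085)*x 1^4*x 4 + ((274102)/223155)*x 0*x 5^4 + ((8)/315)*x 0*x 4*x 5^3 + ((-130439)/223155)*x 0*x 4^2*x 5^2 + ((-926297)/1562085)*x 0*x 4^3*x 5 + ((-1)/9)*x 0*x 3^3*x 5 + ((-1)/18)*x 0*x 3^3*x 4 + ((2)/9)*x 0*x 2*x 3^2*x 5 + ((1)/9)*x 0*x 2*x 3^2*x 4 + ((-49)/150)*x 0*x 2^2*x 3*x 5 + ((-4)/25)*x 0*x 2^2*x 3*x 4 + ((7)/225)*x 0*x 2^3*x 5 + ((2)/225)*x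 0*x 2^3*x 4 + ((-869572)/4686255)*x 0*x 1*x 3*x 5^2 + ((-23107996)/70293825)*x 0*x 1*x 3*x 4*x 5 + ((33926792)/14058765)*x 0*x 1*x 3*x 4^2 + ((34618637)/23431275)*x 0*x 1*x 2*x 5^2 + ((-136637353)/70293825)*x 0*x 1*x 2*x 4*x 5 + ((206117701)/281175300)*x 0*x 1*x 2*x 4^2 + ((42475423)/20083950)*x 0*x 1^3*x 5 + ((41904046)/70293825)*x 0*x 1^3*x 4 + ((-592391)/1562085)*x 0^2*x 3*x 5^2 + ((-80849)/133893)*x 0^2*x 3*x 4*x 5 + ((2406266)/1233225)*x 0^2*x 3*x 4^2 + ((56842913)/46862550)*x 0^2*x 2*x 5^2 + ((-13052362)/4686255)*x 0^2*x 2*x 4*x 5 + ((-58113743)/93725100)*x 0^2*x 2*x 4^2 + ((262664144)/70293825)*x 0^2*x 1^2*x 5 + ((-31340969)/19391400)*x 0^2*x 1^2*x 4 + ((46749589)/23431275)*x 0^3*x 1*x 5 + ((-1531127)/495900)*x 0^3*x 1*x 4 + ((-46749589)/15620850)*x 0^4*x 4) * h3 + (((5372273)/42176295)*x 1^2*x 5^3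 + ((18613)/133893)*x 1^2*x 4*x 5^2 + ((-1723483)/28117530)*x 1^2*x 4^2*x 5 + ((1166750)/8435259)*x 1^2*x 4^3 + ((1520773)/6248340)*x 1^5 + ((-21066572)/42176295)*x 0*x 1*x 5^3 + ((-1179187)/2008395)*x 0*x 1*x 4*x 5^2 + ((-293801)/2008395)*x 0*x 1*x 4^2*x 5 + ((-83477)/634230)*x 0*x 1*x 4^3 + ((617741)/3124170)*x 0*x 1^4) * h4 + (((-70839737)/84352590)*x 1^2*x 5^3 + ((-7614059)/14058765)*x 1^2*x 4*x 5^2 + ((7360169)/14058765)*x 1^2*x 4^2*x 5 + ((4339529)/8435259)*x 1^2*x 4^3 + ((2098825)/624834)*x 1^3*x 2*x 5 + ((-419765)/312417)*x 1^3*x 2*x 4 + ((5742049)/2499336)*x 1^5 + ((1557208)/2219805)*x 0*x 1*x 5^3 + ((-891277)/1479870)*x 0*x 1*x 4*x 5^2 + ((225808)/161595)*x 0*x 1*x 4^2*x 5 + ((-1114181)/8435259)*x 0*x 1*x 4^3 + ((4929419)/6248340)*x 0*x 1^4 + ((-16)/945)*x 0^2*x 5^3 + ((1879042)/1562085)*x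 0^2*x 4*x 5^2 + ((-1852594)/1562085)*x 0^2*x 4^2*x 5 + ((-2114341)/2082780)*x 0^2*x 1^3 + ((109867)/3124170)*x 0^3*x 1^2) * h5
  have hz4 : x 4 ^ 7 = 0 := by
    linear_combination (norm := ring1) (((617741)/3124170)*x 2^4*x 3 + ((1520773)/6248340)*x 2^5 + ((-21066572)/42176295)*x 1^3*x 2*x 3 + ((5372273)/42176295)*x 1^3*x 2^2 + ((-1179187)/2008395)*x 0*x 1^2*x 2*x 3 + ((18613)/133893)*x 0*x 1^2*x 2^2 + ((-293801)/2008395)*x 0^2*x 1*x 2*x 3 + ((-1723483)/28117530)*x 0^2*x 1*x 2^2 + ((-83477)/634230)*x 0^3*x 2*x 3 + ((1166750)/8435259)*x 0^3*x 2^2) * h0 + (((109867)/3124170)*x 2^2*x 3^3 + ((-2114341)/2082780)*x 2^3*x 3^2 + ((4929419)/6248340)*x 2^4*x 3 + ((5742049)/2499336)*x 2^5 + ((2098825)/624834)*x 1*x 2^3*x 5 + ((-16)/945)*x 1^3*x 3^2 + ((1557208)/2219805)*x 1^3*x 2*x 3 + ((-70839737)/84352590)*x 1^3*x 2^2 + ((-419765)/312417)*x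 0*x 2^3*x 5 + ((1879042)/1562085)*x 0*x 1^2*x 3^2 + ((-891277)/1479870)*x 0*x 1^2*x 2*x 3 + ((-7614059)/14058765)*x 0*x 1^2*x 2^2 + ((-1852594)/1562085)*x 0^2*x 1*x 3^2 + ((225808)/161595)*x 0^2*x 1*x 2*x 3 + ((7360169)/14058765)*x 0^2*x 1*x 2^2 + ((-1114181)/8435259)*x 0^3*x 2*x 3 + ((4339529)/8435259)*x 0^3*x 2^2) * h1 + (((-46749589)/7810425)*x 3^4*x 5 + ((-382882181)/46862550)*x 2*x 3^3*x 5 + ((-650984219)/93725100)*x 2^2*x 3^2*x 5 + ((-199531709)/46862550)*x 2^3*x 3*x 5 + ((-2503394)/937251)*x 2^3*x 3*x 4 + ((-10337357)/2975400)*x 2^4*x 5 + ((-7064989)/4686255)*x 2^4*x 4 + ((-1779862)/669465)*x 1^2*x 3^3 + ((-169003888)/210881475)*x 1^2*x 2*x 3^2 + ((-15613313)/23431275)*x 1^2*x 2^2*x 3 + ((-539893847)/210881475)*x 1^2*x 2^3 + ((5127952)/6025185)*x 1^3*x 3*x 5 + ((-65766238)/42176295)*x 1^3*x 2*x 5 +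 ((27257539)/18745020)*x 0*x 2*x 3*x 5^2 + ((-21976159)/37490040)*x 0*x 2^2*x 5^2 + ((32348986)/7810425)*x 0*x 1*x 3^3 + ((853158731)/210881475)*x 0*x 1*x 2*x 3^2 + ((55671559)/14058765)*x 0*x 1*x 2^2*x 3 + ((-3240631637)/843525900)*x 0*x 1*x 2^3 + ((12171854)/14058765)*x 0*x 1^2*x 3*x 5 + ((-8833082)/4686255)*x 0*x 1^2*x 2*x 5 + ((4725193)/807975)*x 0^2*x 3^3 + ((1657020919)/421762950)*x 0^2*x 2*x 3^2 + ((-228015299)/281175300)*x 0^2*x 2^2*x 3 + ((-22818559)/6025185)*x 0^2*x 2^3 + ((4393132)/2008395)*x 0^2*x 1*x 3*x 5 + ((-15314647)/28117530)*x 0^2*x 1*x 2*x 5 + ((10146580)/8435259)*x 0^3*x 3*x 5 + ((-2497937)/2219805)*x 0^3*x 2*x 5 + ((633193)/3124170)*x 0^3*x 2*x 4) * h2 + (((46749589)/15620850)*x 3^4*x 5 + ((132675943)/18745020)*x 2*x 3^3*x 5 + ((9685993)/1071144)*x 2^2*x 3^2*x 5 + ((-109867)/4686255)*x 2^2*x 3^2*x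 4 + ((7776397)/1562085)*x 2^3*x 3*x 5 + ((270998)/133893)*x 2^3*x 3*x 4 + ((38771479)/10413900)*x 2^4*x 5 + ((4345315)/3749004)*x 2^4*x 4 + ((46749589)/15620850)*x 1*x 3^2*x 5^2 + ((1531127)/495900)*x 1*x 2*x 3*x 5^2 + ((488496163)/187450200)*x 1*x 2^2*x 5^2 + ((8129629)/3749004)*x 1^2*x 5^3 + ((889931)/669465)*x 1^2*x 3^3 + ((364830209)/210881475)*x 1^2*x 2*x 3^2 + ((7471523)/2231550)*x 1^2*x 2^2*x 3 + ((602560223)/168705180)*x 1^2*x 2^3 + ((57350011)/42176295)*x 1^3*x 3*x 5 + ((-4)/105)*x 1^3*x 3*x 4 + ((90405799)/84352590)*x 1^3*x 2*x 5 + ((-174019)/104139)*x 1^3*x 2*x 4 + ((-46749589)/10413900)*x 0*x 3^2*x 5^2 + ((-268470407)/93725100)*x 0*x 2*x 3*x 5^2 + ((-51670594)/23431275)*x 0*x 2^2*x 5^2 + ((-170111)/59508)*x 0*x 1*x 5^3 + ((-16174493)/7810425)*x 0*x 1*x 3^3 + ((-1073663827)/210881475)*x 0*x 1*x 2*x 3^2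 + ((-970836347)/281175300)*x 0*x 1*x 2^2*x 3 + ((1080859849)/843525900)*x 0*x 1*x 2^3 + ((-5370049)/28117530)*x 0*x 1^2*x 3*x 5 + ((-1829756)/14058765)*x 0*x 1^2*x 2*x 5 + ((4872503)/4686255)*x 0*x 1^2*x 2*x 4 + ((-12683225)/7498008)*x 0^2*x 5^3 + ((-138639682)/23431275)*x 0^2*x 3^3 + ((-110619497)/22198050)*x 0^2*x 2*x 3^2 + ((-216084898)/70293825)*x 0^2*x 2^2*x 3 + ((191130259)/48201480)*x 0^2*x 2^3 + ((-243746)/44631)*x 0^2*x 1*x 3*x 5 + ((8496284)/14058765)*x 0^2*x 1*x 2*x 5 + ((2379527)/1338930)*x 0^2*x 1*x 2*x 4 + ((-58342835)/33741036)*x 0^3*x 3*x 5 + ((-1297009)/12050370)*x 0^3*x 2*x 5 + ((318109)/231420)*x 0^3*x 2*x 4) * h3 + (((1)/15)*x 5^5 + ((-1)/30)*x 4*x 5^4 + ((1)/12)*x 4^3*x 5^2 + ((-1)/6)*x 4^4*x 5 + ((1)/6)*x 4^5 + ((7)/225)*x 1*x 3*x 5^3 + ((-49)/150)*x 1*x 3*x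 4*x 5^2 + ((2)/9)*x 1*x 3*x 4^2*x 5 + ((-1)/9)*x 1*x 3*x 4^3 + ((2)/225)*x 1*x 2*x 5^3 + ((-4)/25)*x 1*x 2*x 4*x 5^2 + ((1)/9)*x 1*x 2*x 4^2*x 5 + ((-1)/18)*x 1*x 2*x 4^3 + ((46749589)/23431275)*x 1*x 2*x 3^3 + ((262664144)/70293825)*x 1*x 2^2*x 3^2 + ((42475423)/20083950)*x 1*x 2^3*x 3 + ((240790001)/187450200)*x 1*x 2^4 + ((56842913)/46862550)*x 1^2*x 3^2*x 5 + ((-592391)/1562085)*x 1^2*x 3^2*x 4 + ((34618637)/23431275)*x 1^2*x 2*x 3*x 5 + ((-869572)/4686255)*x 1^2*x 2*x 3*x 4 + ((53395763)/28117530)*x 1^2*x 2^2*x 5 + ((73370719)/140587650)*x 1^2*x 2^2*x 4 + ((8129629)/4016790)*x 1^3*x 5^2 + ((16259258)/14058765)*x 1^3*x 4*x 5 + ((274102)/223155)*x 1^4*x 3 + ((9971036)/14058765)*x 1^4*x 2 + ((2)/225)*x 0*x 3*x 5^3 + ((-4)/25)*x 0*x 3*x 4*x 5^2 + ((1)/9)*x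 0*x 3*x 4^2*x 5 + ((-1)/18)*x 0*x 3*x 4^3 + ((-46749589)/15620850)*x 0*x 3^4 + ((7)/225)*x 0*x 2*x 5^3 + ((-49)/150)*x 0*x 2*x 4*x 5^2 + ((2)/9)*x 0*x 2*x 4^2*x 5 + ((-1)/9)*x 0*x 2*x 4^3 + ((-1531127)/495900)*x 0*x 2*x 3^3 + ((-31340969)/19391400)*x 0*x 2^2*x 3^2 + ((41904046)/70293825)*x 0*x 2^3*x 3 + ((-24113)/1562085)*x 0*x 2^4 + ((-13052362)/4686255)*x 0*x 1*x 3^2*x 5 + ((-80849)/133893)*x 0*x 1*x 3^2*x 4 + ((-136637353)/70293825)*x 0*x 1*x 2*x 3*x 5 + ((-23107996)/70293825)*x 0*x 1*x 2*x 3*x 4 + ((-83493901)/56235060)*x 0*x 1*x 2^2*x 5 + ((-11231447)/28117530)*x 0*x 1*x 2^2*x 4 + ((-58759693)/28117530)*x 0*x 1^2*x 5^2 + ((-50997601)/28117530)*x 0*x 1^2*x 4*x 5 + ((8)/315)*x 0*x 1^3*x 3 + ((-8763803)/14058765)*x 0*x 1^3*x 2 + ((-58113743)/93725100)*x 0^2*x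 3^2*x 5 + ((2406266)/1233225)*x 0^2*x 3^2*x 4 + ((206117701)/281175300)*x 0^2*x 2*x 3*x 5 + ((33926792)/14058765)*x 0^2*x 2*x 3*x 4 + ((-31444561)/20827800)*x 0^2*x 2^2*x 5 + ((7824533)/18745020)*x 0^2*x 2^2*x 4 + ((-18807221)/8033580)*x 0^2*x 1*x 5^2 + ((-14649457)/28117530)*x 0^2*x 1*x 4*x 5 + ((-130439)/223155)*x 0^2*x 1^2*x 3 + ((-21883093)/9372510)*x 0^2*x 1^2*x 2 + ((-2536645)/5623506)*x 0^3*x 5^2 + ((2536645)/11247012)*x 0^3*x 4*x 5 + ((-926297)/1562085)*x 0^3*x 1*x 3 + ((-31050923)/14058765)*x 0^3*x 1*x 2 + ((-13900606)/14058765)*x 0^4*x 2) * h4 + (((-1)/30)*x 5^5 + ((-1)/60)*x 4*x 5^4 + ((-11)/225)*x 1*x 3*x 5^3 + ((47)/225)*x 1*x 3*x 4*x 5^2 + ((-1)/225)*x 1*x 2*x 5^3 + ((22)/225)*x 1*x 2*x 4*x 5^2 + ((-93499178)/23431275)*x 1*x 2*x 3^3 + ((-523130948)/70293825)*x 1*x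 2^2*x 3^2 + ((-361856861)/70293825)*x 1*x 2^3*x 3 + ((-291433981)/93725100)*x 1*x 2^4 + ((-88499843)/23431275)*x 1^2*x 3^2*x 5 + ((1416202)/1562085)*x 1^2*x 3^2*x 4 + ((-91818194)/23431275)*x 1^2*x 2*x 3*x 5 + ((2433404)/4686255)*x 1^2*x 2*x 3*x 4 + ((-68007332)/23431275)*x 1^2*x 2^2*x 5 + ((-70767244)/70293825)*x 1^2*x 2^2*x 4 + ((-8129629)/4686255)*x 1^3*x 5^2 + ((-32518516)/14058765)*x 1^3*x 4*x 5 + ((-3758084)/1562085)*x 1^4*x 3 + ((11381348)/14058765)*x 1^4*x 2 + ((-1)/225)*x 0*x 3*x 5^3 + ((22)/225)*x 0*x 3*x 4*x 5^2 + ((46749589)/7810425)*x 0*x 3^4 + ((-11)/225)*x 0*x 2*x 5^3 + ((47)/225)*x 0*x 2*x 4*x 5^2 + ((1531127)/247950)*x 0*x 2*x 3^3 + ((913282781)/281175300)*x 0*x 2^2*x 3^2 + ((71682008)/70293825)*x 0*x 2^3*x 3 + ((2377427)/1874502)*x 0*x 2^4 + ((5889418)/1562085)*x 0*x 1*x 3^2*x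 5 + ((181534)/133893)*x 0*x 1*x 3^2*x 4 + ((4552582)/2603475)*x 0*x 1*x 2*x 3*x 5 + ((72250742)/70293825)*x 0*x 1*x 2*x 3*x 4 + ((4929863)/3124170)*x 0*x 1*x 2^2*x 5 + ((13314227)/14058765)*x 0*x 1*x 2^2*x 4 + ((2587364)/4686255)*x 0*x 1^2*x 5^2 + ((50997601)/14058765)*x 0*x 1^2*x 4*x 5 + ((-8)/315)*x 0*x 1^3*x 3 + ((721016)/739935)*x 0*x 1^3*x 2 + ((33435337)/6694650)*x 0^2*x 3^2*x 5 + ((-4766857)/1233225)*x 0^2*x 3^2*x 4 + ((129702313)/46862550)*x 0^2*x 2*x 3*x 5 + ((-65770804)/14058765)*x 0^2*x 2*x 3*x 4 + ((305705579)/93725100)*x 0^2*x 2^2*x 5 + ((-6436013)/9372510)*x 0^2*x 2^2*x 4 + ((34117211)/9372510)*x 0^2*x 1*x 5^2 + ((14649457)/14058765)*x 0^2*x 1*x 4*x 5 + ((260878)/223155)*x 0^2*x 1^2*x 3 + ((4518179)/2811753)*x 0^2*x 1^2*x 2 + ((2536645)/1874502)*x 0^3*x 5^2 + ((-2536645)/5623506)*x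 0^3*x 4*x 5 + ((1852594)/1562085)*x 0^3*x 1*x 3 + ((17778749)/14058765)*x 0^3*x 1*x 2 + ((22237279)/28117530)*x 0^4*x 2) * h5
  have hz5 : x 5 ^ 7 = 0 := by
    linear_combination (norm := ring1) (((1520773)/6248340)*x 3^5 + ((617741)/3124170)*x 2*x 3^4 + ((5372273)/42176295)*x 1^3*x 3^2 + ((-21066572)/42176295)*x 1^3*x 2*x 3 + ((18613)/133893)*x 0*x 1^2*x 3^2 + ((-1179187)/2008395)*x 0*x 1^2*x 2*x 3 + ((-1723483)/28117530)*x 0^2*x 1*x 3^2 + ((-293801)/2008395)*x 0^2*x 1*x 2*x 3 + ((1166750)/8435259)*x 0^3*x 3^2 + ((-83477)/634230)*x 0^3*x 2*x 3) * h0 + (((5742049)/2499336)*x 3^5 + ((4929419)/6248340)*x 2*x 3^4 + ((-2114341)/2082780)*x 2^2*x 3^3 + ((109867)/3124170)*x 2^3*x 3^2 + ((2098825)/624834)*x 1*x 3^3*x 4 + ((-70839737)/84352590)*x 1^3*x 3^2 + ((1557208)/2219805)*x 1^3*x 2*x 3 + ((-16)/945)*x 1^3*x 2^2 + ((-419765)/312417)*x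 0*x 3^3*x 4 + ((-7614059)/14058765)*x 0*x 1^2*x 3^2 + ((-891277)/1479870)*x 0*x 1^2*x 2*x 3 + ((1879042)/1562085)*x 0*x 1^2*x 2^2 + ((7360169)/14058765)*x 0^2*x 1*x 3^2 + ((225808)/161595)*x 0^2*x 1*x 2*x 3 + ((-1852594)/1562085)*x 0^2*x 1*x 2^2 + ((4339529)/8435259)*x 0^3*x 3^2 + ((-1114181)/8435259)*x 0^3*x 2*x 3) * h1 + (((4345315)/3749004)*x 3^4*x 5 + ((38771479)/10413900)*x 3^4*x 4 + ((270998)/133893)*x 2*x 3^3*x 5 + ((7776397)/1562085)*x 2*x 3^3*x 4 + ((-109867)/4686255)*x 2^2*x 3^2*x 5 + ((9685993)/1071144)*x 2^2*x 3^2*x 4 + ((132675943)/18745020)*x 2^3*x 3*x 4 + ((46749589)/15620850)*x 2^4*x 4 + ((488496163)/187450200)*x 1*x 3^2*x 4^2 + ((1531127)/495900)*x 1*x 2*x 3*x 4^2 + ((46749589)/15620850)*x 1*x 2^2*x 4^2 + ((8129629)/3749004)*x 1^2*x 4^3 + ((602560223)/168705180)*x 1^2*x 3^3 + ((7471523)/2231550)*x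 1^2*x 2*x 3^2 + ((364830209)/210881475)*x 1^2*x 2^2*x 3 + ((889931)/669465)*x 1^2*x 2^3 + ((-174019)/104139)*x 1^3*x 3*x 5 + ((90405799)/84352590)*x 1^3*x 3*x 4 + ((-4)/105)*x 1^3*x 2*x 5 + ((57350011)/42176295)*x 1^3*x 2*x 4 + ((-51670594)/23431275)*x 0*x 3^2*x 4^2 + ((-268470407)/93725100)*x 0*x 2*x 3*x 4^2 + ((-46749589)/10413900)*x 0*x 2^2*x 4^2 + ((-170111)/59508)*x 0*x 1*x 4^3 + ((1080859849)/843525900)*x 0*x 1*x 3^3 + ((-970836347)/281175300)*x 0*x 1*x 2*x 3^2 + ((-1073663827)/210881475)*x 0*x 1*x 2^2*x 3 + ((-16174493)/7810425)*x 0*x 1*x 2^3 + ((4872503)/4686255)*x 0*x 1^2*x 3*x 5 + ((-1829756)/14058765)*x 0*x 1^2*x 3*x 4 + ((-5370049)/28117530)*x 0*x 1^2*x 2*x 4 + ((-12683225)/7498008)*x 0^2*x 4^3 + ((191130259)/48201480)*x 0^2*x 3^3 + ((-216084898)/70293825)*x 0^2*x 2*x 3^2 + ((-110619497)/22198050)*x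 0^2*x 2^2*x 3 + ((-138639682)/23431275)*x 0^2*x 2^3 + ((2379527)/1338930)*x 0^2*x 1*x 3*x 5 + ((8496284)/14058765)*x 0^2*x 1*x 3*x 4 + ((-243746)/44631)*x 0^2*x 1*x 2*x 4 + ((318109)/231420)*x 0^3*x 3*x 5 + ((-1297009)/12050370)*x 0^3*x 3*x 4 + ((-58342835)/33741036)*x 0^3*x 2*x 4) * h2 + (((-7064989)/4686255)*x 3^4*x 5 + ((-10337357)/2975400)*x 3^4*x 4 + ((-2503394)/937251)*x 2*x 3^3*x 5 + ((-199531709)/46862550)*x 2*x 3^3*x 4 + ((-650984219)/93725100)*x 2^2*x 3^2*x 4 + ((-382882181)/46862550)*x 2^3*x 3*x 4 + ((-46749589)/7810425)*x 2^4*x 4 + ((-539893847)/210881475)*x 1^2*x 3^3 + ((-15613313)/23431275)*x 1^2*x 2*x 3^2 + ((-169003888)/210881475)*x 1^2*x 2^2*x 3 + ((-1779862)/669465)*x 1^2*x 2^3 + ((-65766238)/42176295)*x 1^3*x 3*x 4 + ((5127952)/6025185)*x 1^3*x 2*x 4 + ((-21976159)/37490040)*x 0*x 3^2*x 4^2 +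 ((27257539)/18745020)*x 0*x 2*x 3*x 4^2 + ((-3240631637)/843525900)*x 0*x 1*x 3^3 + ((55671559)/14058765)*x 0*x 1*x 2*x 3^2 + ((853158731)/210881475)*x 0*x 1*x 2^2*x 3 + ((32348986)/7810425)*x 0*x 1*x 2^3 + ((-8833082)/4686255)*x 0*x 1^2*x 3*x 4 + ((12171854)/14058765)*x 0*x 1^2*x 2*x 4 + ((-22818559)/6025185)*x 0^2*x 3^3 + ((-228015299)/281175300)*x 0^2*x 2*x 3^2 + ((1657020919)/421762950)*x 0^2*x 2^2*x 3 + ((4725193)/807975)*x 0^2*x 2^3 + ((-15314647)/28117530)*x 0^2*x 1*x 3*x 4 + ((4393132)/2008395)*x 0^2*x 1*x 2*x 4 + ((633193)/3124170)*x 0^3*x 3*x 5 + ((-2497937)/2219805)*x 0^3*x 3*x 4 + ((10146580)/8435259)*x 0^3*x 2*x 4) * h3 + (((-1)/60)*x 4^4*x 5 + ((-1)/30)*x 4^5 + ((22)/225)*x 1*x 3*x 4^2*x 5 + ((-1)/225)*x 1*x 3*x 4^3 + ((-291433981)/93725100)*x 1*x 3^4 + ((47)/225)*x 1*x 2*x 4^2*x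 5 + ((-11)/225)*x 1*x 2*x 4^3 + ((-361856861)/70293825)*x 1*x 2*x 3^3 + ((-523130948)/70293825)*x 1*x 2^2*x 3^2 + ((-93499178)/23431275)*x 1*x 2^3*x 3 + ((-70767244)/70293825)*x 1^2*x 3^2*x 5 + ((-68007332)/23431275)*x 1^2*x 3^2*x 4 + ((2433404)/4686255)*x 1^2*x 2*x 3*x 5 + ((-91818194)/23431275)*x 1^2*x 2*x 3*x 4 + ((1416202)/1562085)*x 1^2*x 2^2*x 5 + ((-88499843)/23431275)*x 1^2*x 2^2*x 4 + ((-32518516)/14058765)*x 1^3*x 4*x 5 + ((-8129629)/4686255)*x 1^3*x 4^2 + ((11381348)/14058765)*x 1^4*x 3 + ((-3758084)/1562085)*x 1^4*x 2 + ((47)/225)*x 0*x 3*x 4^2*x 5 + ((-11)/225)*x 0*x 3*x 4^3 + ((2377427)/1874502)*x 0*x 3^4 + ((22)/225)*x 0*x 2*x 4^2*x 5 + ((-1)/225)*x 0*x 2*x 4^3 + ((71682008)/70293825)*x 0*x 2*x 3^3 + ((913282781)/281175300)*x 0*x 2^2*x 3^2 + ((1531127)/247950)*x 0*x 2^3*x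 3 + ((46749589)/7810425)*x 0*x 2^4 + ((13314227)/14058765)*x 0*x 1*x 3^2*x 5 + ((4929863)/3124170)*x 0*x 1*x 3^2*x 4 + ((72250742)/70293825)*x 0*x 1*x 2*x 3*x 5 + ((4552582)/2603475)*x 0*x 1*x 2*x 3*x 4 + ((181534)/133893)*x 0*x 1*x 2^2*x 5 + ((5889418)/1562085)*x 0*x 1*x 2^2*x 4 + ((50997601)/14058765)*x 0*x 1^2*x 4*x 5 + ((2587364)/4686255)*x 0*x 1^2*x 4^2 + ((721016)/739935)*x 0*x 1^3*x 3 + ((-8)/315)*x 0*x 1^3*x 2 + ((-6436013)/9372510)*x 0^2*x 3^2*x 5 + ((305705579)/93725100)*x 0^2*x 3^2*x 4 + ((-65770804)/14058765)*x 0^2*x 2*x 3*x 5 + ((129702313)/46862550)*x 0^2*x 2*x 3*x 4 + ((-4766857)/1233225)*x 0^2*x 2^2*x 5 + ((33435337)/6694650)*x 0^2*x 2^2*x 4 + ((14649457)/14058765)*x 0^2*x 1*x 4*x 5 + ((34117211)/9372510)*x 0^2*x 1*x 4^2 + ((4518179)/2811753)*x 0^2*x 1^2*x 3 + ((260878)/223155)*x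 0^2*x 1^2*x 2 + ((-2536645)/5623506)*x 0^3*x 4*x 5 + ((2536645)/1874502)*x 0^3*x 4^2 + ((17778749)/14058765)*x 0^3*x 1*x 3 + ((1852594)/1562085)*x 0^3*x 1*x 2 + ((22237279)/28117530)*x 0^4*x 3) * h4 + (((1)/6)*x 5^5 + ((-1)/6)*x 4*x 5^4 + ((1)/12)*x 4^2*x 5^3 + ((-1)/30)*x 4^4*x 5 + ((1)/15)*x 4^5 + ((-1)/18)*x 1*x 3*x 5^3 + ((1)/9)*x 1*x 3*x 4*x 5^2 + ((-4)/25)*x 1*x 3*x 4^2*x 5 + ((2)/225)*x 1*x 3*x 4^3 + ((240790001)/187450200)*x 1*x 3^4 + ((-1)/9)*x 1*x 2*x 5^3 + ((2)/9)*x 1*x 2*x 4*x 5^2 + ((-49)/150)*x 1*x 2*x 4^2*x 5 + ((7)/225)*x 1*x 2*x 4^3 + ((42475423)/20083950)*x 1*x 2*x 3^3 + ((262664144)/70293825)*x 1*x 2^2*x 3^2 + ((46749589)/23431275)*x 1*x 2^3*x 3 + ((73370719)/140587650)*x 1^2*x 3^2*x 5 + ((53395763)/28117530)*x 1^2*x 3^2*x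 4 + ((-869572)/4686255)*x 1^2*x 2*x 3*x 5 + ((34618637)/23431275)*x 1^2*x 2*x 3*x 4 + ((-592391)/1562085)*x 1^2*x 2^2*x 5 + ((56842913)/46862550)*x 1^2*x 2^2*x 4 + ((16259258)/14058765)*x 1^3*x 4*x 5 + ((8129629)/4016790)*x 1^3*x 4^2 + ((9971036)/14058765)*x 1^4*x 3 + ((274102)/223155)*x 1^4*x 2 + ((-1)/9)*x 0*x 3*x 5^3 + ((2)/9)*x 0*x 3*x 4*x 5^2 + ((-49)/150)*x 0*x 3*x 4^2*x 5 + ((7)/225)*x 0*x 3*x 4^3 + ((-24113)/1562085)*x 0*x 3^4 + ((-1)/18)*x 0*x 2*x 5^3 + ((1)/9)*x 0*x 2*x 4*x 5^2 + ((-4)/25)*x 0*x 2*x 4^2*x 5 + ((2)/225)*x 0*x 2*x 4^3 + ((41904046)/70293825)*x 0*x 2*x 3^3 + ((-31340969)/19391400)*x 0*x 2^2*x 3^2 + ((-1531127)/495900)*x 0*x 2^3*x 3 + ((-46749589)/15620850)*x 0*x 2^4 + ((-11231447)/28117530)*x 0*x 1*x 3^2*x 5 + ((-83493901)/56235060)*x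 0*x 1*x 3^2*x 4 + ((-23107996)/70293825)*x 0*x 1*x 2*x 3*x 5 + ((-136637353)/70293825)*x 0*x 1*x 2*x 3*x 4 + ((-80849)/133893)*x 0*x 1*x 2^2*x 5 + ((-13052362)/4686255)*x 0*x 1*x 2^2*x 4 + ((-50997601)/28117530)*x 0*x 1^2*x 4*x 5 + ((-58759693)/28117530)*x 0*x 1^2*x 4^2 + ((-8763803)/14058765)*x 0*x 1^3*x 3 + ((8)/315)*x 0*x 1^3*x 2 + ((7824533)/18745020)*x 0^2*x 3^2*x 5 + ((-31444561)/20827800)*x 0^2*x 3^2*x 4 + ((33926792)/14058765)*x 0^2*x 2*x 3*x 5 + ((206117701)/281175300)*x 0^2*x 2*x 3*x 4 + ((2406266)/1233225)*x 0^2*x 2^2*x 5 + ((-58113743)/93725100)*x 0^2*x 2^2*x 4 + ((-14649457)/28117530)*x 0^2*x 1*x 4*x 5 + ((-18807221)/8033580)*x 0^2*x 1*x 4^2 + ((-21883093)/9372510)*x 0^2*x 1^2*x 3 + ((-130439)/223155)*x 0^2*x 1^2*x 2 + ((2536645)/11247012)*x 0^3*x 4*x 5 + ((-2536645)/5623506)*x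 0^3*x 4^2 + ((-31050923)/14058765)*x 0^3*x 1*x 3 + ((-926297)/1562085)*x 0^3*x 1*x 2 + ((-13900606)/14058765)*x 0^4*x 3) * h5
  funext i
  fin_cases i
  · exact pow_eq_zero_iff (by norm_num) |>.mp hz0
  · exact pow_eq_zero_iff (by norm_num) |>.mp hz1
  · exact pow_eq_zero_iff (by norm_num) |>.mp hz2
  · exact pow_eq_zero_iff (by norm_num) |>.mp hz3
  · exact pow_eq_zero_iff (by norm_num) |>.mp hz4
  · exact pow_eq_zero_iff (by norm_num) |>.mp hz5
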